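/- The function f(x) = log Γ(x+1) / (x log x) is strictly increasing on (1, ∞), with limits 1 - γ as x → 1⁺ and 1 as x → ∞. -/

import Mathlib

/-!
Write the quotient as `F / G` with `F x = log Γ(x + 1)` and `G x = x log x`, both vanishing
at `1`. By the monotone form of l'Hôpital's rule (a consequence of Cauchy's mean value theorem)
it increases on `(1, ∞)` as soon as `F' / G' = ψ(x + 1) / (log x + 1)` does, which amounts to
`ψ(x + 1) < x ψ'(x + 1) (log x + 1)`. At `x = 1` this is `1 - γ < ψ'(2)`, true as
`ψ'(2) ≥ 1/2` and `γ > 1/2`; beyond, the difference of the two sides has derivative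
`(x ψ'(x + 1))' (log x + 1)`, and `x ψ'(x + 1)` increases because comparison with telescoping
series gives `ψ'(x + 1) ≥ 1 / (x + 1)` and `-ψ''(x + 1) ≤ 1 / (x + 1/2)²`.
Here `ψ` and its derivatives are the termwise derivatives of Weierstrass' series for
`log Γ(x + 1)`. The limit at `1` is l'Hôpital's rule, and the one at `∞` follows from
monotonicity and `log n! ~ n log n`.
-/

open Real Set Filter Topology
open scoped Nat

local notation "γ" => eulerMascheroniConstant

theorem exists_mul_deriv_eq_of_tendsto_nhdsGT {f g f' g' : ℝ → ℝ} {a x : ℝ} (hx : a < x)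
    (hf : ∀ y ∈ Ioi a, HasDerivAt f (f' y) y) (hg : ∀ y ∈ Ioi a, HasDerivAt g (g' y) y)
    (hfa : Tendsto f (𝓝[>] a) (𝓝 0)) (hga : Tendsto g (𝓝[>] a) (𝓝 0)) :
    ∃ c ∈ Ioo a x, g x * f' c = f x * g' c := by
  simpa using exists_ratio_hasDerivAt_eq_ratio_slope' f f' hx g g'
    (fun y hy => hf y hy.1) (fun y hy => hg y hy.1) hfa hga
    ((hf x hx).continuousAt.tendsto.mono_left nhdsWithin_le_nhds)
    ((hg x hx).continuousAt.tendsto.mono_left nhdsWithin_le_nhds)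

theorem strictMonoOn_div_of_strictMonoOn_deriv_div {f g f' g' : ℝ → ℝ} {a : ℝ}
    (hf : ∀ x ∈ Ioi a, HasDerivAt f (f' x) x) (hg : ∀ x ∈ Ioi a, HasDerivAt g (g' x) x)
    (hfa : Tendsto f (𝓝[>] a) (𝓝 0)) (hga : Tendsto g (𝓝[>] a) (𝓝 0))
    (hg' : ∀ x ∈ Ioi a, 0 < g' x) (hmono : StrictMonoOn (fun x => f' x / g' x) (Ioi a)) :
    StrictMonoOn (fun x => f x / g x) (Ioi a) := by
  have hg_pos : ∀ x ∈ Ioi a, 0 < g x := fun x hx => by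
    obtain ⟨c, hc, h⟩ := exists_mul_deriv_eq_of_tendsto_nhdsGT (g := fun y => y - a) hx hg
      (fun y _ => (hasDerivAt_id' y).sub_const a) hga
      (((continuous_sub_right a).tendsto' a 0 (sub_self a)).mono_left nhdsWithin_le_nhds)
    rw [mul_one] at h
    exact h ▸ mul_pos (sub_pos.2 hx) (hg' c hc.1)
  have hlt : ∀ x ∈ Ioi a, f x * g' x < f' x * g x := fun x hx => by
    obtain ⟨c, hc, h⟩ := exists_mul_deriv_eq_of_tendsto_nhdsGT hx hf hg hfa hga
    have hcx : f x / g x < f' x / g' x :=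
      calc f x / g x = f' c / g' c :=
            (div_eq_div_iff (hg_pos x hx).ne' (hg' c hc.1).ne').2 (by linarith)
        _ < f' x / g' x := hmono hc.1 hx hc.2
    rwa [div_lt_div_iff₀ (hg_pos x hx) (hg' x hx)] at hcx
  have hd : ∀ x ∈ Ioi a, HasDerivAt (fun y => f y / g y)
      ((f' x * g x - f x * g' x) / g x ^ 2) x :=
    fun x hx => (hf x hx).div (hg x hx) (hg_pos x hx).ne'
  refine strictMonoOn_of_hasDerivWithinAt_pos (convex_Ioi a)
    (fun x hx => (hd x hx).continuousAt.continuousWithinAt)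
    (fun x hx => (hd x (interior_subset hx)).hasDerivWithinAt) fun x hx => ?_
  rw [interior_Ioi] at hx
  exact div_pos (sub_pos.2 (hlt x hx)) (pow_pos (hg_pos x hx) 2)

theorem MonotoneOn.tendsto_atTop_of_tendsto_natCast {f : ℝ → ℝ} {a l : ℝ}
    (hf : MonotoneOn f (Ioi a)) (hl : Tendsto (fun n : ℕ => f n) atTop (𝓝 l)) :
    Tendsto f atTop (𝓝 l) := by
  refine tendsto_of_tendsto_of_tendsto_of_le_of_le' (hl.comp tendsto_nat_floor_atTop)
    tendsto_const_nhds ?_ ?_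
  · filter_upwards [eventually_ge_atTop (a + 1), eventually_ge_atTop 0] with x hxa hx0
    exact hf (by linarith [Nat.lt_floor_add_one x] : a < ⌊x⌋₊) (by linarith : a < x)
      (Nat.floor_le hx0)
  · filter_upwards [eventually_gt_atTop a] with x hx
    refine ge_of_tendsto hl ?_
    filter_upwards [eventually_ge_atTop ⌈x⌉₊] with n hn
    exact hf hx (lt_of_lt_of_le hx (Nat.ceil_le.1 hn)) (Nat.ceil_le.1 hn)

theorem summable_one_div_add_pow (x : ℝ) {p : ℕ} (hp : 2 ≤ p) :
    Summable fun k : ℕ => 1 / (x + k + 1) ^ p := by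
  have h := (Real.summable_one_div_nat_add_rpow (x + 1) p).2 (by exact_mod_cast hp)
  refine Summable.of_norm (h.congr fun k => ?_)
  rw [Real.rpow_natCast, norm_div, norm_one, norm_pow, Real.norm_eq_abs]
  ring_nf

theorem tendsto_one_div_add_pow_atTop (x : ℝ) {p : ℕ} (hp : p ≠ 0) :
    Tendsto (fun k : ℕ => 1 / (x + k + 1) ^ p) atTop (𝓝 0) := by
  refine ((tendsto_pow_atTop hp).comp (tendsto_atTop_add_const_right _ 1
    (tendsto_atTop_add_const_left _ x tendsto_natCast_atTop_atTop))).inv_tendsto_atTop.congr ?_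
  simp

theorem hasSum_sub_succ_of_antitone {f : ℕ → ℝ} {l : ℝ} (hf : Antitone f)
    (hl : Tendsto f atTop (𝓝 l)) : HasSum (fun k => f k - f (k + 1)) (f 0 - l) := by
  rw [hasSum_iff_tendsto_nat_of_nonneg fun k => sub_nonneg.2 (hf k.le_succ)]
  simpa only [Finset.sum_range_sub'] using tendsto_const_nhds.sub hl

theorem one_div_add_pow_le {a y : ℝ} (ha : -1 < a) (hy : a ≤ y) (k p : ℕ) :
    1 / (y + k + 1) ^ p ≤ 1 / (a + k + 1) ^ p := by
  have : 0 < a + k + 1 := by linarith [(k.cast_nonneg : (0 : ℝ) ≤ k)]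
  gcongr

theorem abs_one_div_sub_one_div_le {a c y : ℝ} (ha : -1 < a) (ha0 : a ≤ 0) (hc0 : 0 ≤ c)
    (hy : y ∈ Ioo a c) (k : ℕ) :
    |1 / ((k : ℝ) + 1) - 1 / (y + k + 1)| ≤ (c - a) * (1 / (a + k + 1) ^ 2) := by
  obtain ⟨hay, hyc⟩ := hy
  have ha' : 0 < a + k + 1 := by linarith [(k.cast_nonneg : (0 : ℝ) ≤ k)]
  have hy' : a + k + 1 < y + k + 1 := by linarith
  have hsub : 1 / ((k : ℝ) + 1) - 1 / (y + k + 1) = y / ((k + 1) * (y + k + 1)) := by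
    field_simp [(by linarith : y + k + 1 ≠ 0)]
    ring
  rw [hsub, abs_div, abs_of_pos (a := (k + 1) * (y + k + 1)) (by nlinarith), mul_one_div]
  exact div_le_div₀ (by linarith) (abs_le.2 ⟨by linarith, by linarith⟩)
    (by positivity) (by rw [sq]; exact mul_le_mul (by linarith) hy'.le ha'.le (by linarith))

theorem one_div_sub_one_div_add_one_le {A : ℝ} (hA : 0 < A) :
    1 / A - 1 / (A + 1) ≤ 1 / A ^ 2 := by
  rw [div_sub_div _ _ hA.ne' (by positivity), div_le_div_iff₀ (by positivity) (by positivity)]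
  nlinarith

theorem one_div_pow_three_le {A : ℝ} (hA : 1 / 2 < A) :
    1 / A ^ 3 ≤ 1 / (2 * (A - 1 / 2) ^ 2) - 1 / (2 * (A + 1 / 2) ^ 2) := by
  have h1 : 0 < A - 1 / 2 := by linarith
  rw [div_sub_div _ _ (by positivity) (by positivity),
    div_le_div_iff₀ (by positivity) (by positivity)]
  nlinarith [pow_pos h1 2, pow_pos h1 3, mul_pos h1 h1]

theorem hasDerivAt_one_div_add_pow (c : ℝ) (p : ℕ) {y : ℝ} (hy : y + c ≠ 0) :
    HasDerivAt (fun z => 1 / (z + c) ^ p) (-p * (1 / (y + c) ^ (p + 1))) y := by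
  have h := (hasDerivAt_zpow (-p) (y + c) (Or.inl hy)).comp y ((hasDerivAt_id' y).add_const c)
  refine (h.congr_deriv ?_).congr_of_eventuallyEq (Eventually.of_forall fun z => ?_)
  · rw [show -(p : ℤ) - 1 = -((p + 1 : ℕ) : ℤ) by push_cast; ring, zpow_neg, zpow_natCast]
    simp
  · simp

theorem sum_range_sub_log_one_add_div {x : ℝ} (hx : -1 < x) (n : ℕ) :
    ∑ k ∈ Finset.range n, (x / (k + 1) - log (1 + x / (k + 1))) =
      x * harmonic n + log n ! - ∑ k ∈ Finset.range n, log (x + 1 + k) := by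
  induction n with
  | zero => simp
  | succ n ih =>
    have hn : (0 : ℝ) < n + 1 := by positivity
    have hxn : 0 < x + 1 + n := by linarith [(n.cast_nonneg : (0 : ℝ) ≤ n)]
    rw [Finset.sum_range_succ, Finset.sum_range_succ, ih, harmonic_succ, Nat.factorial_succ]
    push_cast
    rw [log_mul hn.ne' (by positivity), one_add_div hn.ne', log_div (by linarith) hn.ne',
      show (n : ℝ) + 1 + x = x + 1 + n by ring]
    ring

theorem hasSum_log_Gamma_add_one {x : ℝ} (hx : -1 < x) :
    HasSum (fun k : ℕ => x / (k + 1) - log (1 + x / (k + 1))) (log (Gamma (x + 1)) + γ * x) := by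
  have hterm : ∀ k : ℕ, 0 ≤ x / (k + 1) - log (1 + x / (k + 1)) := fun k => by
    have : -1 < x / (k + 1) := by
      rw [lt_div_iff₀ (by positivity)]
      linarith [(k.cast_nonneg : (0 : ℝ) ≤ k)]
    linarith [log_le_sub_one_of_pos (by linarith : 0 < 1 + x / (k + 1))]
  rw [hasSum_iff_tendsto_nat_of_nonneg hterm]
  have hlim := ((BohrMollerup.tendsto_log_gamma (by linarith : 0 < x + 1)).add
    (tendsto_harmonic_sub_log.const_mul x)).add
    ((tendsto_log_comp_add_sub_log (x + 1)).comp tendsto_natCast_atTop_atTop)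
  rw [add_zero, mul_comm] at hlim
  refine hlim.congr fun n => ?_
  rw [sum_range_sub_log_one_add_div hx, BohrMollerup.logGammaSeq, Finset.sum_range_succ]
  simp only [Function.comp_apply]
  ring_nf

noncomputable def digammaAddOne (x : ℝ) : ℝ :=
  -γ + ∑' k : ℕ, (1 / (k + 1) - 1 / (x + k + 1))

noncomputable def hurwitzZetaAddOne (p : ℕ) (x : ℝ) : ℝ :=
  ∑' k : ℕ, 1 / (x + k + 1) ^ p

theorem hasDerivAt_hurwitzZetaAddOne {p : ℕ} (hp : 2 ≤ p) {x : ℝ} (hx : -1 < x) :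
    HasDerivAt (hurwitzZetaAddOne p) (-p * hurwitzZetaAddOne (p + 1) x) x := by
  obtain ⟨a, ha, hax⟩ := exists_between hx
  have hpos : ∀ y ∈ Ioi a, ∀ k : ℕ, 0 < y + k + 1 := fun y hy k => by
    linarith [hy.out, (k.cast_nonneg : (0 : ℝ) ≤ k)]
  rw [hurwitzZetaAddOne, ← tsum_mul_left]
  refine hasDerivAt_tsum_of_isPreconnected
    (u := fun k : ℕ => (p : ℝ) * (1 / (a + k + 1) ^ (p + 1)))
    (g := fun (k : ℕ) (y : ℝ) => 1 / (y + k + 1) ^ p)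
    (g' := fun (k : ℕ) (y : ℝ) => -(p : ℝ) * (1 / (y + k + 1) ^ (p + 1)))
    ((summable_one_div_add_pow a (by omega)).mul_left (p : ℝ)) isOpen_Ioi isPreconnected_Ioi
    (fun k y hy => ?_) (fun k y hy => ?_) hax (summable_one_div_add_pow x hp) hax
  · simpa only [add_assoc] using
      hasDerivAt_one_div_add_pow ((k : ℝ) + 1) p (by rw [← add_assoc]; exact (hpos y hy k).ne')
  · rw [norm_mul, norm_neg, Real.norm_natCast,
      Real.norm_of_nonneg (by have := hpos y hy k; positivity)]
    exact mul_le_mul_of_nonneg_left (one_div_add_pow_le ha hy.out.le k (p + 1)) p.cast_nonneg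

theorem hasDerivAt_digammaAddOne {x : ℝ} (hx : -1 < x) :
    HasDerivAt digammaAddOne (hurwitzZetaAddOne 2 x) x := by
  obtain ⟨a, ha, hax⟩ := exists_between (lt_min hx neg_one_lt_zero)
  have hpos : ∀ y ∈ Ioi a, ∀ k : ℕ, 0 < y + k + 1 := fun y hy k => by
    linarith [hy.out, (k.cast_nonneg : (0 : ℝ) ≤ k)]
  -- Convergence is needed at a single point of `(a, ∞)`; at `0` every term vanishes.
  refine HasDerivAt.const_add _ (hasDerivAt_tsum_of_isPreconnected
    (g := fun (k : ℕ) (y : ℝ) => 1 / ((k : ℝ) + 1) - 1 / (y + k + 1))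
    (g' := fun (k : ℕ) (y : ℝ) => 1 / (y + k + 1) ^ 2)
    (summable_one_div_add_pow a le_rfl) isOpen_Ioi isPreconnected_Ioi
    (fun k y hy => ?_) (fun k y hy => ?_) (y₀ := 0) (lt_of_lt_of_le hax (min_le_right _ _))
    (by simp) (lt_of_lt_of_le hax (min_le_left _ _)))
  · simpa only [add_assoc, pow_one, neg_mul, one_mul, Nat.cast_one, neg_neg, zero_sub] using
      (hasDerivAt_one_div_add_pow ((k : ℝ) + 1) 1
        (by rw [← add_assoc]; exact (hpos y hy k).ne')).const_sub (1 / ((k : ℝ) + 1))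
  · rw [Real.norm_of_nonneg (by have := hpos y hy k; positivity)]
    exact one_div_add_pow_le ha hy.out.le k 2

theorem hasDerivAt_log_Gamma_add_one {x : ℝ} (hx : -1 < x) :
    HasDerivAt (fun y => log (Gamma (y + 1))) (digammaAddOne x) x := by
  obtain ⟨a, ha, hax⟩ := exists_between (lt_min hx neg_one_lt_zero)
  have hxt : x ∈ Ioo a (x + 1) := ⟨lt_of_lt_of_le hax (min_le_left _ _), by linarith⟩
  have hseries := hasDerivAt_tsum_of_isPreconnected
    (g := fun (k : ℕ) (y : ℝ) => y / (k + 1) - log (1 + y / (k + 1)))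
    (g' := fun (k : ℕ) (y : ℝ) => 1 / ((k : ℝ) + 1) - 1 / (y + k + 1))
    ((summable_one_div_add_pow a le_rfl).mul_left (x + 1 - a)) isOpen_Ioo isPreconnected_Ioo
    (fun k y hy => ?_) (fun k y hy => ?_) hxt (hasSum_log_Gamma_add_one hx).summable hxt
  · refine ((hasDerivAt_id' x).const_mul (-γ)).add hseries |>.congr_of_eventuallyEq ?_
      |>.congr_deriv (by simp [digammaAddOne])
    filter_upwards [Ioi_mem_nhds hx] with y hy
    simp only [Pi.add_apply, (hasSum_log_Gamma_add_one hy).tsum_eq]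
    ring
  · have hk : (0 : ℝ) < k + 1 := by positivity
    have hdiv : HasDerivAt (fun z : ℝ => z / (k + 1)) (1 / ((k : ℝ) + 1)) y := by
      simpa using (hasDerivAt_id' y).div_const ((k : ℝ) + 1)
    refine (hdiv.sub ((hdiv.const_add 1).log ?_)).congr_deriv ?_
    · rw [one_add_div hk.ne']
      exact (div_pos (by linarith [hy.1, (k.cast_nonneg : (0 : ℝ) ≤ k)]) hk).ne'
    · rw [one_add_div hk.ne', div_div_div_cancel_right₀ hk.ne']
      ring_nf
  · exact abs_one_div_sub_one_div_le ha (lt_of_lt_of_le hax (min_le_right _ _)).le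
      (by linarith) hy k

theorem digammaAddOne_one : digammaAddOne 1 = 1 - γ := by
  have h := hasSum_sub_succ_of_antitone (f := fun k : ℕ => 1 / ((k : ℝ) + 1))
    (antitone_nat_of_succ_le fun k => by gcongr; simp) tendsto_one_div_add_atTop_nhds_zero_nat
  rw [digammaAddOne, (h.congr_fun fun k => by push_cast; ring_nf).tsum_eq]
  ring

theorem one_div_add_one_le_hurwitzZetaAddOne_two {x : ℝ} (hx : -1 < x) :
    1 / (x + 1) ≤ hurwitzZetaAddOne 2 x := by
  have hpos : ∀ k : ℕ, 0 < x + k + 1 := fun k => by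
    linarith [(k.cast_nonneg : (0 : ℝ) ≤ k)]
  have h := hasSum_sub_succ_of_antitone (f := fun k : ℕ => 1 / (x + k + 1) ^ 1)
    (antitone_nat_of_succ_le fun k => by have := hpos k; gcongr; simp)
    (tendsto_one_div_add_pow_atTop x one_ne_zero)
  calc 1 / (x + 1) = 1 / (x + ((0 : ℕ) : ℝ) + 1) ^ 1 - 0 := by simp
    _ ≤ hurwitzZetaAddOne 2 x :=
      hasSum_le (fun k => ?_) h (summable_one_div_add_pow x le_rfl).hasSum
  simpa only [Nat.cast_succ, pow_one, add_assoc] using one_div_sub_one_div_add_one_le (hpos k)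

theorem hurwitzZetaAddOne_three_le {x : ℝ} (hx : -1 / 2 < x) :
    hurwitzZetaAddOne 3 x ≤ 1 / (2 * (x + 1 / 2) ^ 2) := by
  have hpos : ∀ k : ℕ, 1 / 2 < x + k + 1 := fun k => by
    linarith [(k.cast_nonneg : (0 : ℝ) ≤ k)]
  have h := hasSum_sub_succ_of_antitone (f := fun k : ℕ => 1 / (2 * (x + k + 1 - 1 / 2) ^ 2))
    (antitone_nat_of_succ_le fun k => by have := hpos k; push_cast; gcongr; linarith)
    (((tendsto_one_div_add_pow_atTop (x - 1 / 2) two_ne_zero).const_mul (1 / 2)).congr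
      fun k => by field_simp; ring_nf)
  calc hurwitzZetaAddOne 3 x
      ≤ 1 / (2 * (x + ((0 : ℕ) : ℝ) + 1 - 1 / 2) ^ 2) - 1 / 2 * 0 :=
        hasSum_le (fun k => ?_) (summable_one_div_add_pow x (by norm_num)).hasSum h
    _ = 1 / (2 * (x + 1 / 2) ^ 2) := by ring_nf
  have e : x + ((k + 1 : ℕ) : ℝ) + 1 - 1 / 2 = x + k + 1 + 1 / 2 := by push_cast; ring
  simpa only [e] using one_div_pow_three_le (hpos k)

theorem hasDerivAt_mul_hurwitzZetaAddOne_two {x : ℝ} (hx : -1 < x) :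
    HasDerivAt (fun y => y * hurwitzZetaAddOne 2 y)
      (hurwitzZetaAddOne 2 x - 2 * x * hurwitzZetaAddOne 3 x) x := by
  refine ((hasDerivAt_id' x).mul (hasDerivAt_hurwitzZetaAddOne le_rfl hx)).congr_deriv ?_
  push_cast
  ring

theorem two_mul_hurwitzZetaAddOne_three_lt {x : ℝ} (hx : 0 ≤ x) :
    2 * x * hurwitzZetaAddOne 3 x < hurwitzZetaAddOne 2 x :=
  calc 2 * x * hurwitzZetaAddOne 3 x ≤ 2 * x * (1 / (2 * (x + 1 / 2) ^ 2)) := by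
        gcongr; exact hurwitzZetaAddOne_three_le (by linarith)
    _ < 1 / (x + 1) := by
        rw [mul_one_div, div_lt_div_iff₀ (by positivity) (by positivity)]; nlinarith
    _ ≤ hurwitzZetaAddOne 2 x := one_div_add_one_le_hurwitzZetaAddOne_two (by linarith)

theorem digammaAddOne_lt {x : ℝ} (hx : 1 ≤ x) :
    digammaAddOne x < x * hurwitzZetaAddOne 2 x * (log x + 1) := by
  set H := fun y => y * hurwitzZetaAddOne 2 y * (log y + 1) - digammaAddOne y
  have hH : ∀ y : ℝ, 0 < y → HasDerivAt H
      ((hurwitzZetaAddOne 2 y - 2 * y * hurwitzZetaAddOne 3 y) * (log y + 1)) y := fun y hy => by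
    refine (((hasDerivAt_mul_hurwitzZetaAddOne_two (by linarith)).mul
      ((hasDerivAt_log hy.ne').add_const 1)).sub
        (hasDerivAt_digammaAddOne (by linarith))).congr_deriv ?_
    field_simp
    ring
  have hH_mono : MonotoneOn H (Ici 1) := monotoneOn_of_hasDerivWithinAt_nonneg (convex_Ici 1)
    (fun y hy => (hH y (by linarith [hy.out])).continuousAt.continuousWithinAt)
    (fun y hy => (hH y (by rw [interior_Ici] at hy; linarith [hy.out])).hasDerivWithinAt)
    (fun y hy => by
      rw [interior_Ici] at hy
      exact mul_nonneg (sub_pos.2 (two_mul_hurwitzZetaAddOne_three_lt (by linarith [hy.out]))).le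
        (by linarith [log_nonneg hy.out.le]))
  have hH_one : 0 < H 1 := by
    have := one_div_add_one_le_hurwitzZetaAddOne_two (x := 1) (by norm_num)
    simp only [H, log_one, digammaAddOne_one]
    linarith [one_half_lt_eulerMascheroniConstant]
  linarith [hH_mono self_mem_Ici hx hx]

theorem strictMonoOn_digammaAddOne_div_log_add_one :
    StrictMonoOn (fun x => digammaAddOne x / (log x + 1)) (Ioi 1) := by
  have hlog : ∀ x ∈ Ioi (1 : ℝ), 0 < log x + 1 := fun x hx => by linarith [log_pos hx.out]
  have hd : ∀ x ∈ Ioi (1 : ℝ), HasDerivAt (fun x => digammaAddOne x / (log x + 1))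
      ((hurwitzZetaAddOne 2 x * (log x + 1) - digammaAddOne x * x⁻¹) / (log x + 1) ^ 2) x :=
    fun x hx => (hasDerivAt_digammaAddOne (by linarith [hx.out])).div
      ((hasDerivAt_log (by linarith [hx.out])).add_const 1) (hlog x hx).ne'
  refine strictMonoOn_of_hasDerivWithinAt_pos (convex_Ioi 1)
    (fun x hx => (hd x hx).continuousAt.continuousWithinAt)
    (fun x hx => (hd x (interior_subset hx)).hasDerivWithinAt) fun x hx => ?_
  rw [interior_Ioi] at hx
  have := digammaAddOne_lt hx.out.le
  refine div_pos ?_ (pow_pos (hlog x hx) 2)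
  rw [sub_pos, ← div_eq_mul_inv, div_lt_iff₀ (by linarith [hx.out])]
  linarith

theorem tendsto_log_factorial_div_mul_log :
    Tendsto (fun n : ℕ => log n ! / (n * log n)) atTop (𝓝 1) := by
  have hlog := tendsto_log_atTop.comp tendsto_natCast_atTop_atTop
  have hlow : Tendsto (fun n : ℕ => 1 - (log n)⁻¹) atTop (𝓝 1) := by
    simpa using hlog.inv_tendsto_atTop.const_sub 1
  refine tendsto_of_tendsto_of_tendsto_of_le_of_le' hlow tendsto_const_nhds ?_ ?_
  · filter_upwards [hlog.eventually_gt_atTop 0] with n (hn : 0 < log n)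
    have hn0 : n ≠ 0 := by rintro rfl; simp at hn
    have hstirling := Stirling.le_log_factorial_stirling hn0
    have : 0 < log (2 * π) := log_pos (by linarith [pi_gt_three])
    have : (1 - (log n)⁻¹) * (n * log n) = n * log n - n := by field_simp
    rw [le_div_iff₀ (by positivity), this]
    linarith
  · filter_upwards [hlog.eventually_gt_atTop 0] with n (hn : 0 < log n)
    have hn0 : n ≠ 0 := by rintro rfl; simp at hn
    rw [div_le_one (by positivity), ← log_pow]
    exact log_le_log (by positivity) (by exact_mod_cast Nat.factorial_le_pow n)

theorem log_gamma_div_strictMono :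
    StrictMonoOn (fun x : ℝ => Real.log (Real.Gamma (x + 1)) / (x * Real.log x))
      (Set.Ioi 1) ∧
    Filter.Tendsto (fun x : ℝ => Real.log (Real.Gamma (x + 1)) / (x * Real.log x))
      (nhdsWithin 1 (Set.Ioi 1)) (nhds (1 - Real.eulerMascheroniConstant)) ∧
    Filter.Tendsto (fun x : ℝ => Real.log (Real.Gamma (x + 1)) / (x * Real.log x))
      Filter.atTop (nhds 1) := by
  have hF (x : ℝ) (hx : x ∈ Ioi 1) :
      HasDerivAt (fun y => log (Gamma (y + 1))) (digammaAddOne x) x :=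
    hasDerivAt_log_Gamma_add_one (by linarith [hx.out])
  have hG (x : ℝ) (hx : x ∈ Ioi 1) : HasDerivAt (fun y => y * log y) (log x + 1) x :=
    hasDerivAt_mul_log (by linarith [hx.out])
  have hG' (x : ℝ) (hx : x ∈ Ioi 1) : 0 < log x + 1 := by linarith [log_pos hx.out]
  have hF1 : Tendsto (fun y => log (Gamma (y + 1))) (𝓝[>] 1) (𝓝 0) := by
    simpa [one_add_one_eq_two] using
      (hasDerivAt_log_Gamma_add_one (by norm_num : (-1 : ℝ) < 1)).continuousAt.tendsto.mono_left
        nhdsWithin_le_nhds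
  have hG1 : Tendsto (fun y => y * log y) (𝓝[>] 1) (𝓝 0) := by
    simpa using continuous_mul_log.tendsto 1 |>.mono_left nhdsWithin_le_nhds
  have hmono := strictMonoOn_div_of_strictMonoOn_deriv_div hF hG hF1 hG1 hG'
    strictMonoOn_digammaAddOne_div_log_add_one
  refine ⟨hmono, ?_, hmono.monotoneOn.tendsto_atTop_of_tendsto_natCast ?_⟩
  · have hcont : ContinuousAt (fun x => digammaAddOne x / (log x + 1)) 1 :=
      (hasDerivAt_digammaAddOne (by norm_num)).continuousAt.div
        ((continuousAt_log one_ne_zero).add continuousAt_const) (by simp)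
    refine HasDerivAt.lhopital_zero_nhdsGT (eventually_nhdsWithin_of_forall hF)
      (eventually_nhdsWithin_of_forall hG)
      (eventually_nhdsWithin_of_forall fun x hx => (hG' x hx).ne') hF1 hG1 ?_
    simpa [digammaAddOne_one] using hcont.tendsto.mono_left nhdsWithin_le_nhds
  · simpa only [Gamma_nat_eq_factorial] using tendsto_log_factorial_div_mul_log
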